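/- arXiv:1609.08607 — 5 statements merged into one kernel-verified Lean document; each statement's English description precedes it below -/
import Mathlib

section
/- Let Φ : I → ℝ be a convex function on an interval I of positive real numbers, let T, V be bounded linear invertible operators on a complex Hilbert space H, and let 0 < m < M with [m², M²] contained in the interior of I and m‖Tx‖ ≤ ‖Vx‖ ≤ M‖Tx‖ for all x ∈ H. Then for every subgradient selection φ of Φ and every t in the interior of I, one has ⊙_Φ(V,T) ≥ Φ(t)|T|² + φ(t)(|V|² − t|T|²) in the operator order. -/
/-!
The norm bounds say `m²|T|² ≤ |V|² ≤ M²|T|²` in the Loewner order; conjugating by `T⁻¹` gives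
`m² ≤ X ≤ M²`, so the spectrum of `X = |VT⁻¹|²` lies in the interior of `I`, where `Φ` lies above its supporting line `s ↦ Φ t + φ t (s - t)`. Monotonicity of the
functional calculus turns this into `Φ t + φ t (X - t) ≤ Φ(X)`, and conjugating by `T` gives the
claim, because `T* X T = |V|²`.
-/

variable {H : Type*} [NormedAddCommGroup H] [InnerProductSpace ℂ H] [CompleteSpace H]

/-- `X = |VT⁻¹|² = (T*)⁻¹ V* V T⁻¹`. -/
noncomputable def qX (V T : (H →L[ℂ] H)ˣ) : H →L[ℂ] H :=
  star (↑(T⁻¹) : H →L[ℂ] H) * (star (V : H →L[ℂ] H) * (V : H →L[ℂ] H)) * (↑(T⁻¹) : H →L[ℂ] H)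

/-- The quadratic operator perspective `⊙_Φ(V,T) = T* Φ(X) T`. -/
noncomputable def qPersp (Φ : ℝ → ℝ) (V T : (H →L[ℂ] H)ˣ) : H →L[ℂ] H :=
  star (T : H →L[ℂ] H) * cfc Φ (qX V T) * (T : H →L[ℂ] H)

/-- `|T|² = T*T`. -/
noncomputable def modSq (T : (H →L[ℂ] H)ˣ) : H →L[ℂ] H :=
  star (T : H →L[ℂ] H) * (T : H →L[ℂ] H)

section StarRing

variable {A : Type*} [Ring A] [StarRing A]

theorem Units.star_mul_conj_inv_mul (u : Aˣ) (b : A) :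
    star (u : A) * (star (↑u⁻¹ : A) * b * ↑u⁻¹) * u = b := by
  rw [← mul_assoc, ← mul_assoc, ← star_mul, u.inv_mul, star_one, one_mul, mul_assoc,
    u.inv_mul, mul_one]

variable [Algebra ℝ A]

theorem Units.star_inv_mul_smul_mul_inv (u : Aˣ) (r : ℝ) :
    star (↑u⁻¹ : A) * (r • (star (u : A) * u)) * ↑u⁻¹ = algebraMap ℝ A r := by
  rw [Algebra.algebraMap_eq_smul_one, mul_smul_comm, smul_mul_assoc]
  simpa using congrArg (r • ·) (u⁻¹.star_mul_conj_inv_mul 1)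

variable [PartialOrder A] [StarOrderedRing A]

theorem Units.algebraMap_le_star_inv_mul_mul_inv {u : Aˣ} {a : A} {r : ℝ}
    (h : r • (star (u : A) * u) ≤ a) : algebraMap ℝ A r ≤ star (↑u⁻¹ : A) * a * ↑u⁻¹ :=
  u.star_inv_mul_smul_mul_inv r ▸ star_left_conjugate_le_conjugate h _

theorem Units.star_inv_mul_mul_inv_le_algebraMap {u : Aˣ} {a : A} {r : ℝ}
    (h : a ≤ r • (star (u : A) * u)) : star (↑u⁻¹ : A) * a * ↑u⁻¹ ≤ algebraMap ℝ A r :=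
  u.star_inv_mul_smul_mul_inv r ▸ star_left_conjugate_le_conjugate h _

end StarRing

theorem smul_one_add_smul_sub_le_cfc {A : Type*} [CStarAlgebra A] [PartialOrder A]
    [StarOrderedRing A] {a : A} (ha : IsSelfAdjoint a) {f : ℝ → ℝ}
    (hf : ContinuousOn f (spectrum ℝ a)) {t c : ℝ}
    (h : ∀ s ∈ spectrum ℝ a, f t + c * (s - t) ≤ f s) :
    f t • (1 : A) + c • (a - t • 1) ≤ cfc f a := by
  have haff : cfc (fun s => f t + c * (s - t)) a = f t • (1 : A) + c • (a - t • 1) := by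
    rw [cfc_const_add _ _ _ (by fun_prop) ha, cfc_const_mul _ _ _ (by fun_prop),
      cfc_sub _ _ _ (by fun_prop) (by fun_prop), cfc_id' ℝ a ha, cfc_const _ _ ha,
      Algebra.algebraMap_eq_smul_one, Algebra.algebraMap_eq_smul_one]
  exact haff ▸ cfc_mono h (hg := hf)

namespace ContinuousLinearMap

variable {E F : Type*} [NormedAddCommGroup E] [InnerProductSpace ℂ E] [CompleteSpace E]
  [NormedAddCommGroup F] [InnerProductSpace ℂ F] [CompleteSpace F]

theorem smul_adjoint_comp_self_le {A B : E →L[ℂ] F} {a b : ℝ} (ha : 0 ≤ a)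
    (h : ∀ x, a * ‖A x‖ ≤ b * ‖B x‖) :
    a ^ 2 • (adjoint A ∘L A) ≤ b ^ 2 • (adjoint B ∘L B) := by
  have hA : IsSelfAdjoint (a ^ 2 • (adjoint A ∘L A)) :=
    (IsSelfAdjoint.all _).smul A.isPositive_adjoint_comp_self.isSelfAdjoint
  have hB : IsSelfAdjoint (b ^ 2 • (adjoint B ∘L B)) :=
    (IsSelfAdjoint.all _).smul B.isPositive_adjoint_comp_self.isSelfAdjoint
  refine isPositive_def'.mpr ⟨hB.sub hA, fun x => ?_⟩
  have hsq := pow_le_pow_left₀ (by positivity) (h x) 2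
  rw [mul_pow, mul_pow, apply_norm_sq_eq_inner_adjoint_left,
    apply_norm_sq_eq_inner_adjoint_left] at hsq
  simp only [reApplyInnerSelf_apply, sub_apply, smul_apply, inner_sub_left,
    inner_smul_left_eq_smul, map_sub, RCLike.smul_re]
  linarith

end ContinuousLinearMap

theorem isSelfAdjoint_qX (V T : (H →L[ℂ] H)ˣ) : IsSelfAdjoint (qX V T) := by
  simp only [qX, IsSelfAdjoint, star_mul, star_star, mul_assoc]

theorem star_mul_qX_mul (V T : (H →L[ℂ] H)ˣ) : star (T : H →L[ℂ] H) * qX V T * T = modSq V :=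
  T.star_mul_conj_inv_mul _

theorem spectrum_qX_subset_Icc {V T : (H →L[ℂ] H)ˣ} {m M : ℝ} (hm : 0 ≤ m)
    (hTV : ∀ x : H, m * ‖(T : H →L[ℂ] H) x‖ ≤ ‖(V : H →L[ℂ] H) x‖ ∧
      ‖(V : H →L[ℂ] H) x‖ ≤ M * ‖(T : H →L[ℂ] H) x‖) :
    spectrum ℝ (qX V T) ⊆ Set.Icc (m ^ 2) (M ^ 2) := by
  have hlow : m ^ 2 • modSq T ≤ (1 : ℝ) ^ 2 • modSq V :=
    ContinuousLinearMap.smul_adjoint_comp_self_le hm fun x => by simpa using (hTV x).1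
  have hup : (1 : ℝ) ^ 2 • modSq V ≤ M ^ 2 • modSq T :=
    ContinuousLinearMap.smul_adjoint_comp_self_le zero_le_one fun x => by simpa using (hTV x).2
  rw [one_pow, one_smul] at hlow hup
  intro s hs
  exact ⟨(algebraMap_le_iff_le_spectrum (isSelfAdjoint_qX V T)).mp
      (T.algebraMap_le_star_inv_mul_mul_inv hlow) s hs,
    (le_algebraMap_iff_spectrum_le (isSelfAdjoint_qX V T)).mp
      (T.star_inv_mul_mul_inv_le_algebraMap hup) s hs⟩

theorem stmt1_general (I : Set ℝ)
    (Φ : ℝ → ℝ) (hΦ : ConvexOn ℝ I Φ)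
    (T V : (H →L[ℂ] H)ˣ) (m M : ℝ) (hm : 0 < m)
    (hsub : Set.Icc (m ^ 2) (M ^ 2) ⊆ interior I)
    (hTV : ∀ x : H, m * ‖(T : H →L[ℂ] H) x‖ ≤ ‖(V : H →L[ℂ] H) x‖ ∧ ‖(V : H →L[ℂ] H) x‖ ≤ M * ‖(T : H →L[ℂ] H) x‖)
    (φ : ℝ → ℝ) (hφ : ∀ a ∈ interior I, ∀ t ∈ I, Φ a + (t - a) * φ a ≤ Φ t)
    (t : ℝ) (ht : t ∈ interior I) :
    Φ t • modSq T + φ t • (modSq V - t • modSq T) ≤ qPersp Φ V T := by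
  have hspec : spectrum ℝ (qX V T) ⊆ interior I :=
    (spectrum_qX_subset_Icc hm.le hTV).trans hsub
  have hsupport : ∀ s ∈ spectrum ℝ (qX V T), Φ t + φ t * (s - t) ≤ Φ s := fun s hs => by
    linarith [hφ t ht s (interior_subset (hspec hs))]
  have key := star_left_conjugate_le_conjugate
    (smul_one_add_smul_sub_le_cfc (isSelfAdjoint_qX V T)
      (hΦ.continuousOn_interior.mono hspec) hsupport) (T : H →L[ℂ] H)
  have hlhs : star (T : H →L[ℂ] H) * (Φ t • 1 + φ t • (qX V T - t • 1)) * T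
      = Φ t • modSq T + φ t • (modSq V - t • modSq T) := by
    simp only [mul_add, add_mul, mul_sub, sub_mul, mul_smul_comm, smul_mul_assoc, mul_one,
      star_mul_qX_mul]
    rfl
  exact hlhs ▸ key

theorem stmt1 (I : Set ℝ) (hIpos : I ⊆ Set.Ioi 0)
    (Φ : ℝ → ℝ) (hΦ : ConvexOn ℝ I Φ)
    (T V : (H →L[ℂ] H)ˣ) (m M : ℝ) (hm : 0 < m) (hmM : m < M)
    (hsub : Set.Icc (m ^ 2) (M ^ 2) ⊆ interior I)
    (hTV : ∀ x : H, m * ‖(T : H →L[ℂ] H) x‖ ≤ ‖(V : H →L[ℂ] H) x‖ ∧ ‖(V : H →L[ℂ] H) x‖ ≤ M * ‖(T : H →L[ℂ] H) x‖)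
    (φ : ℝ → ℝ) (hφ : ∀ a ∈ interior I, ∀ t ∈ I, Φ a + (t - a) * φ a ≤ Φ t)
    (t : ℝ) (ht : t ∈ interior I) :
    Φ t • modSq T + φ t • (modSq V - t • modSq T) ≤ qPersp Φ V T :=
  stmt1_general I Φ hΦ T V m M hm hsub hTV φ hφ t ht
end

section
/- Let T, V be bounded linear invertible operators on a complex Hilbert space H. Then for every real t > 0 and every ν ∈ [0,1], in the operator order: T Ⓢ_ν V ≤ (1−ν) t^ν |T|² + ν t^{ν−1} |V|². -/
variable {H : Type*} [NormedAddCommGroup H] [InnerProductSpace ℂ H] [CompleteSpace H]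

lemma key_scalar {t ν : ℝ} (ht : 0 < t) (hν0 : 0 ≤ ν) (hν1 : ν ≤ 1)
    {x : ℝ} (hx : 0 ≤ x) :
    x ^ ν ≤ (1 - ν) * t ^ ν + ν * (t ^ (ν - 1) * x) := by
  have h := Real.geom_mean_le_arith_mean2_weighted (sub_nonneg.2 hν1) hν0
    (Real.rpow_pos_of_pos ht ν).le
    (mul_nonneg (Real.rpow_pos_of_pos ht (ν - 1)).le hx) (by ring)
  calc x ^ ν = (t ^ ν) ^ (1 - ν) * (t ^ (ν - 1) * x) ^ ν := by
        rw [Real.mul_rpow (Real.rpow_pos_of_pos ht (ν - 1)).le hx,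
          ← Real.rpow_mul ht.le, ← Real.rpow_mul ht.le,
          ← mul_assoc, ← Real.rpow_add ht,
          show ν * (1 - ν) + (ν - 1) * ν = 0 by ring, Real.rpow_zero, one_mul]
    _ ≤ (1 - ν) * t ^ ν + ν * (t ^ (ν - 1) * x) := h

theorem stmt12 (T V : (H →L[ℂ] H)ˣ) (t : ℝ) (ht : 0 < t)
    (ν : ℝ) (hν : ν ∈ Set.Icc (0 : ℝ) 1) :
    qPersp (fun s : ℝ => s ^ ν) V T ≤
      ((1 - ν) * t ^ ν) • modSq T + (ν * t ^ (ν - 1)) • modSq V := by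
  obtain ⟨hν0, hν1⟩ := hν
  set X : H →L[ℂ] H := qX V T with hXdef
  have hX : (0 : H →L[ℂ] H) ≤ X := by
    rw [hXdef, qX]
    simpa [star_mul, mul_assoc] using
      star_mul_self_nonneg ((V : H →L[ℂ] H) * (↑(T⁻¹) : H →L[ℂ] H))
  have hXsa : IsSelfAdjoint X := IsSelfAdjoint.of_nonneg hX
  set c : ℝ := (1 - ν) * t ^ ν with hc
  set d : ℝ := ν * t ^ (ν - 1) with hd
  have hmono : cfc (fun s : ℝ => s ^ ν) X ≤ cfc (fun s : ℝ => c + d * s) X := by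
    refine cfc_mono (fun x hx => ?_) ?_ ?_
    · have hx0 : 0 ≤ x := spectrum_nonneg_of_nonneg hX hx
      have := key_scalar ht hν0 hν1 hx0
      rw [hc, hd]; nlinarith [this]
    · exact (Real.continuous_rpow_const hν0).continuousOn
    · fun_prop
  have hcfc : cfc (fun s : ℝ => c + d * s) X = c • (1 : H →L[ℂ] H) + d • X := by
    rw [cfc_add X (fun _ => c) (fun s => d * s), cfc_const c X, cfc_const_mul_id d X,
      Algebra.algebraMap_eq_smul_one]
  have hconj := star_left_conjugate_le_conjugate (hmono.trans_eq hcfc) (T : H →L[ℂ] H)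
  have hTinvT : (↑(T⁻¹) : H →L[ℂ] H) * (T : H →L[ℂ] H) = 1 := by
    simp
  have hTXT : star (T : H →L[ℂ] H) * X * (T : H →L[ℂ] H)
      = star (V : H →L[ℂ] H) * (V : H →L[ℂ] H) := by
    have h1 : star (T : H →L[ℂ] H) * star (↑(T⁻¹) : H →L[ℂ] H) = 1 := by
      rw [← star_mul, hTinvT, star_one]
    rw [hXdef, qX]
    calc star (T : H →L[ℂ] H) *
          (star (↑(T⁻¹) : H →L[ℂ] H) * (star (V : H →L[ℂ] H) * (V : H →L[ℂ] H)) *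
            (↑(T⁻¹) : H →L[ℂ] H)) * (T : H →L[ℂ] H)
        = (star (T : H →L[ℂ] H) * star (↑(T⁻¹) : H →L[ℂ] H)) *
            (star (V : H →L[ℂ] H) * (V : H →L[ℂ] H)) *
            ((↑(T⁻¹) : H →L[ℂ] H) * (T : H →L[ℂ] H)) := by simp only [mul_assoc]
      _ = star (V : H →L[ℂ] H) * (V : H →L[ℂ] H) := by rw [h1, hTinvT, one_mul, mul_one]
  have hrhs : star (T : H →L[ℂ] H) * (c • (1 : H →L[ℂ] H) + d • X) * (T : H →L[ℂ] H)
      = c • modSq T + d • modSq V := by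
    rw [mul_add, add_mul, modSq, modSq, ← hTXT]
    simp [mul_smul_comm, smul_mul_assoc, mul_assoc]
  calc qPersp (fun s : ℝ => s ^ ν) V T
      = star (T : H →L[ℂ] H) * cfc (fun s : ℝ => s ^ ν) X * (T : H →L[ℂ] H) := rfl
    _ ≤ star (T : H →L[ℂ] H) * (c • (1 : H →L[ℂ] H) + d • X) * (T : H →L[ℂ] H) := hconj
    _ = c • modSq T + d • modSq V := hrhs
end

section
/- Let T, V be bounded linear invertible operators on a complex Hilbert space H with 0 < m < M and m‖Tx‖ ≤ ‖Vx‖ ≤ M‖Tx‖ for all x ∈ H. Then for every ν ∈ [0,1], in the operator order: T Ⓢ_ν V ≤ (1−ν)·((m²+M²)/2)^ν·|T|² + ν·((m²+M²)/2)^{ν−1}·|V|². -/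
variable {H : Type*} [NormedAddCommGroup H] [InnerProductSpace ℂ H] [CompleteSpace H]

theorem stmt13 (T V : (H →L[ℂ] H)ˣ) (m M : ℝ) (hm : 0 < m) (hmM : m < M)
    (hTV : ∀ x : H, m * ‖(T : H →L[ℂ] H) x‖ ≤ ‖(V : H →L[ℂ] H) x‖ ∧ ‖(V : H →L[ℂ] H) x‖ ≤ M * ‖(T : H →L[ℂ] H) x‖)
    (ν : ℝ) (hν : ν ∈ Set.Icc (0 : ℝ) 1) :
    qPersp (fun s : ℝ => s ^ ν) V T ≤
      ((1 - ν) * ((m ^ 2 + M ^ 2) / 2) ^ ν) • modSq T +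
        (ν * ((m ^ 2 + M ^ 2) / 2) ^ (ν - 1)) • modSq V := by
  obtain ⟨hν0, hν1⟩ := hν
  set c : ℝ := (m ^ 2 + M ^ 2) / 2 with hc
  have hcpos : 0 < c := by positivity
  set a : ℝ := (1 - ν) * c ^ ν with ha
  set b : ℝ := ν * c ^ (ν - 1) with hb
  set X := qX V T with hX
  have hXeq : X = star ((V : H →L[ℂ] H) * (↑(T⁻¹) : H →L[ℂ] H)) *
      ((V : H →L[ℂ] H) * (↑(T⁻¹) : H →L[ℂ] H)) := by
    simp [hX, qX, star_mul, mul_assoc]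
  have hXnn : (0 : H →L[ℂ] H) ≤ X := hXeq ▸ star_mul_self_nonneg _
  have hXsa : IsSelfAdjoint X := .of_nonneg hXnn
  have hcont : Continuous fun s : ℝ => s ^ ν := by
    rw [continuous_iff_continuousAt]
    exact fun x => Real.continuousAt_rpow_const x ν (Or.inr hν0)
  have hcc : c ^ (ν - 1) * c = c ^ ν := by
    rw [Real.rpow_sub hcpos, Real.rpow_one]
    field_simp
  -- scalar inequality on the spectrum
  have key : ∀ s ∈ spectrum ℝ X, s ^ ν ≤ a + b * s := by
    intro s hs
    have hs0 : 0 ≤ s := spectrum_nonneg_of_nonneg hXnn hs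
    have h := Real.geom_mean_le_arith_mean2_weighted (w₁ := 1 - ν) (w₂ := ν)
      (p₁ := c) (p₂ := s) (by linarith) hν0 hcpos.le hs0 (by ring)
    have h2 := mul_le_mul_of_nonneg_left h (Real.rpow_nonneg hcpos.le (ν - 1))
    calc s ^ ν = c ^ (ν - 1) * (c ^ (1 - ν) * s ^ ν) := by
          rw [← mul_assoc, ← Real.rpow_add hcpos]; norm_num
      _ ≤ c ^ (ν - 1) * ((1 - ν) * c + ν * s) := h2
      _ = a + b * s := by rw [ha, hb, mul_add, ← mul_assoc, ← mul_assoc,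
          mul_comm (c ^ (ν - 1)) (1 - ν), mul_comm (c ^ (ν - 1)) ν, mul_assoc (1 - ν), hcc]
  have hmono : cfc (fun s : ℝ => s ^ ν) X ≤ cfc (fun s : ℝ => a + b * s) X :=
    cfc_mono key hcont.continuousOn (by fun_prop)
  have hcfc : cfc (fun s : ℝ => a + b * s) X = a • (1 : H →L[ℂ] H) + b • X := by
    rw [cfc_const_add a (fun s => b * s) X ((continuous_const.mul continuous_id).continuousOn) hXsa,
      cfc_const_mul b (fun s : ℝ => s) X continuous_id.continuousOn,
      cfc_id' ℝ X hXsa, Algebra.algebraMap_eq_smul_one]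
  have hconj := star_left_conjugate_le_conjugate hmono (T : H →L[ℂ] H)
  rw [hcfc] at hconj
  have h1 : star (↑T : H →L[ℂ] H) * star (↑(T⁻¹) : H →L[ℂ] H) = 1 := by
    rw [← star_mul, T.inv_mul, star_one]
  have hTXT : star (↑T : H →L[ℂ] H) * X * ↑T = modSq V := by
    rw [hX]
    unfold qX modSq
    calc star (↑T : H →L[ℂ] H) *
          (star (↑(T⁻¹) : H →L[ℂ] H) * (star (↑V : H →L[ℂ] H) * ↑V) * ↑(T⁻¹)) * ↑T
        = (star (↑T : H →L[ℂ] H) * star (↑(T⁻¹) : H →L[ℂ] H)) *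
          (star (↑V : H →L[ℂ] H) * ↑V) * ((↑(T⁻¹) : H →L[ℂ] H) * ↑T) := by
          simp only [mul_assoc]
      _ = star (↑V : H →L[ℂ] H) * ↑V := by rw [h1, T.inv_mul, one_mul, mul_one]
  have hexp : star (↑T : H →L[ℂ] H) * (a • (1 : H →L[ℂ] H) + b • X) * ↑T
      = a • modSq T + b • modSq V := by
    rw [mul_add, add_mul, mul_smul_comm, mul_smul_comm, smul_mul_assoc, smul_mul_assoc,
      mul_one, hTXT]
    rfl
  calc qPersp (fun s : ℝ => s ^ ν) V T
      = star (↑T : H →L[ℂ] H) * cfc (fun s : ℝ => s ^ ν) X * ↑T := rfl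
    _ ≤ star (↑T : H →L[ℂ] H) * (a • (1 : H →L[ℂ] H) + b • X) * ↑T := hconj
    _ = a • modSq T + b • modSq V := hexp
end

section
/- Let T, V be bounded linear invertible operators on a complex Hilbert space H. Then for every x ∈ H and every ν ∈ [0,1]: ⟨(T Ⓢ_ν V)x, x⟩ ≤ ‖Tx‖^{2(1−ν)}·‖Vx‖^{2ν}. -/
/-
With `y = T x` the left-hand side is `⟪X^ν y, y⟫`, while `⟪X y, y⟫ = ‖V x‖²`. Since `t ↦ t^ν` is
concave, it lies below its tangent line at any `l > 0`, and the continuous functional calculus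
turns this into the operator inequality `X^ν ≤ (1 - ν) l^ν + ν l^(ν-1) X`. Evaluating at `y` with
`l = ⟪X y, y⟫ / ‖y‖²` gives the Hölder–McCarthy inequality `⟪X^ν y, y⟫ ≤ ‖y‖^(2(1-ν)) ⟪X y, y⟫^ν`.
-/

variable {H : Type*} [NormedAddCommGroup H] [InnerProductSpace ℂ H] [CompleteSpace H]

open Real

theorem Real.rpow_le_tangent {ν t l : ℝ} (hν₀ : 0 ≤ ν) (hν₁ : ν ≤ 1) (ht : 0 ≤ t) (hl : 0 < l) :
    t ^ ν ≤ (1 - ν) * l ^ ν + ν * l ^ (ν - 1) * t := by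
  have hgm : t ^ ν * l ^ (1 - ν) ≤ ν * t + (1 - ν) * l :=
    geom_mean_le_arith_mean2_weighted hν₀ (by linarith) ht hl.le (by ring)
  have hcancel : l ^ (1 - ν) * l ^ (ν - 1) = 1 := by
    rw [← rpow_add hl]; simp
  calc t ^ ν = t ^ ν * l ^ (1 - ν) * l ^ (ν - 1) := by rw [mul_assoc, hcancel, mul_one]
    _ ≤ (ν * t + (1 - ν) * l) * l ^ (ν - 1) := by gcongr
    _ = (1 - ν) * l ^ ν + ν * l ^ (ν - 1) * t := by
      rw [rpow_sub_one hl.ne']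
      field_simp
      ring

theorem cfc_rpow_le_tangent {A : Type*} [CStarAlgebra A] [PartialOrder A] [StarOrderedRing A]
    {a : A} (ha : 0 ≤ a) {ν l : ℝ} (hν₀ : 0 ≤ ν) (hν₁ : ν ≤ 1) (hl : 0 < l) :
    cfc (fun t : ℝ => t ^ ν) a ≤ algebraMap ℝ A ((1 - ν) * l ^ ν) + (ν * l ^ (ν - 1)) • a := by
  have hline : cfc (fun t : ℝ => (1 - ν) * l ^ ν + ν * l ^ (ν - 1) * t) a =
      algebraMap ℝ A ((1 - ν) * l ^ ν) + (ν * l ^ (ν - 1)) • a := by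
    rw [cfc_add a _ _ (by fun_prop) (by fun_prop), cfc_const _ a, cfc_const_mul_id _ a]
  rw [← hline]
  exact cfc_mono (fun t ht => rpow_le_tangent hν₀ hν₁ (spectrum_nonneg_of_nonneg ha ht) hl)
    (fun t _ => (continuousAt_rpow_const t ν (Or.inr hν₀)).continuousWithinAt)

namespace ContinuousLinearMap

theorem units_inv_apply_apply {R M : Type*} [Semiring R] [AddCommMonoid M]
    [Module R M] [TopologicalSpace M] (u : (M →L[R] M)ˣ) (x : M) :
    (↑u⁻¹ : M →L[R] M) ((u : M →L[R] M) x) = x := by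
  rw [← mul_apply_eq_comp, u.inv_mul, one_apply_eq_self]

theorem re_inner_le_of_le {𝕜 E : Type*} [RCLike 𝕜] [NormedAddCommGroup E] [InnerProductSpace 𝕜 E]
    {A B : E →L[𝕜] E} (h : A ≤ B) (y : E) :
    RCLike.re (inner 𝕜 (A y) y) ≤ RCLike.re (inner 𝕜 (B y) y) := by
  have := ((le_def A B).mp h).re_inner_nonneg_left y
  rwa [sub_apply, inner_sub_left, map_sub, sub_nonneg] at this

theorem re_inner_cfc_rpow_le {A : H →L[ℂ] H} (hA : 0 ≤ A) {ν : ℝ} (hν₀ : 0 ≤ ν) (hν₁ : ν ≤ 1)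
    {y : H} (hy : 0 < (inner ℂ (A y) y).re) :
    (inner ℂ (cfc (fun t : ℝ => t ^ ν) A y) y).re ≤
      (‖y‖ ^ 2) ^ (1 - ν) * (inner ℂ (A y) y).re ^ ν := by
  set b := (inner ℂ (A y) y).re
  have hy₀ : y ≠ 0 := by rintro rfl; simp [b] at hy
  have ha : 0 < ‖y‖ ^ 2 := by positivity
  calc (inner ℂ (cfc (fun t : ℝ => t ^ ν) A y) y).re
      ≤ (inner ℂ ((algebraMap ℝ _ ((1 - ν) * (b / ‖y‖ ^ 2) ^ ν) +
          (ν * (b / ‖y‖ ^ 2) ^ (ν - 1)) • A) y) y).re :=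
        re_inner_le_of_le (cfc_rpow_le_tangent hA hν₀ hν₁ (div_pos hy ha)) y
    _ = (1 - ν) * (b / ‖y‖ ^ 2) ^ ν * ‖y‖ ^ 2 + ν * (b / ‖y‖ ^ 2) ^ (ν - 1) * b := by
        simp [Algebra.algebraMap_eq_smul_one, b, ← Complex.ofReal_pow]
    _ = (‖y‖ ^ 2) ^ (1 - ν) * b ^ ν := by
        rw [div_rpow hy.le ha.le, div_rpow hy.le ha.le, rpow_sub_one hy.ne', rpow_sub_one ha.ne',
          rpow_sub ha, rpow_one]
        field_simp
        ring

end ContinuousLinearMap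

theorem qX_eq_star_mul_self (V T : (H →L[ℂ] H)ˣ) :
    qX V T = star ((V : H →L[ℂ] H) * ↑T⁻¹) * ((V : H →L[ℂ] H) * ↑T⁻¹) := by
  simp [qX, star_mul, mul_assoc]

theorem qX_nonneg (V T : (H →L[ℂ] H)ˣ) : 0 ≤ qX V T :=
  qX_eq_star_mul_self V T ▸ star_mul_self_nonneg _

theorem re_inner_qX_apply_self (V T : (H →L[ℂ] H)ˣ) (x : H) :
    (inner ℂ (qX V T ((T : H →L[ℂ] H) x)) ((T : H →L[ℂ] H) x)).re = ‖(V : H →L[ℂ] H) x‖ ^ 2 := by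
  simp [qX_eq_star_mul_self, ContinuousLinearMap.star_eq_adjoint,
    ContinuousLinearMap.adjoint_inner_left, ContinuousLinearMap.units_inv_apply_apply,
    ← Complex.ofReal_pow]

theorem inner_qPersp_apply_self (Φ : ℝ → ℝ) (V T : (H →L[ℂ] H)ˣ) (x : H) :
    inner ℂ (qPersp Φ V T x) x =
      inner ℂ (cfc Φ (qX V T) ((T : H →L[ℂ] H) x)) ((T : H →L[ℂ] H) x) := by
  simp only [qPersp, mul_apply_eq_comp, ContinuousLinearMap.star_eq_adjoint,
    ContinuousLinearMap.adjoint_inner_left]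

theorem stmt15 (T V : (H →L[ℂ] H)ˣ) (x : H)
    (ν : ℝ) (hν : ν ∈ Set.Icc (0 : ℝ) 1) :
    (inner ℂ ((qPersp (fun s : ℝ => s ^ ν) V T) x) x : ℂ).re ≤
      ‖(T : H →L[ℂ] H) x‖ ^ (2 * (1 - ν)) * ‖(V : H →L[ℂ] H) x‖ ^ (2 * ν) := by
  obtain ⟨hν₀, hν₁⟩ := hν
  rcases eq_or_ne x 0 with rfl | hx
  · simp only [map_zero, inner_zero_right, Complex.zero_re]
    positivity
  have hVx : (V : H →L[ℂ] H) x ≠ 0 := fun h => hx <| by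
    rw [← ContinuousLinearMap.units_inv_apply_apply V x, h, map_zero]
  calc (inner ℂ ((qPersp (fun s : ℝ => s ^ ν) V T) x) x).re
      = (inner ℂ (cfc (fun s : ℝ => s ^ ν) (qX V T) ((T : H →L[ℂ] H) x))
          ((T : H →L[ℂ] H) x)).re := by rw [inner_qPersp_apply_self]
    _ ≤ (‖(T : H →L[ℂ] H) x‖ ^ 2) ^ (1 - ν) *
          (inner ℂ (qX V T ((T : H →L[ℂ] H) x)) ((T : H →L[ℂ] H) x)).re ^ ν :=
      ContinuousLinearMap.re_inner_cfc_rpow_le (qX_nonneg V T) hν₀ hν₁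
        (by rw [re_inner_qX_apply_self]; positivity)
    _ = ‖(T : H →L[ℂ] H) x‖ ^ (2 * (1 - ν)) * ‖(V : H →L[ℂ] H) x‖ ^ (2 * ν) := by
      simp only [re_inner_qX_apply_self, ← rpow_natCast_mul (norm_nonneg _), Nat.cast_ofNat]
end

section
/- Let T, V be bounded linear invertible operators on a complex Hilbert space H. Then for every real t > 0, in the operator order: ⊙(T|V) ≤ (ln t)|T|² − |T|² + t⁻¹|V|², where ⊙(T|V) is the quadratic relative operator entropy. -/
variable {H : Type*} [NormedAddCommGroup H] [InnerProductSpace ℂ H] [CompleteSpace H]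

theorem stmt18 (T V : (H →L[ℂ] H)ˣ) (t : ℝ) (ht : 0 < t) :
    qPersp Real.log V T ≤
      Real.log t • modSq T - modSq T + t⁻¹ • modSq V := by
  set M : H →L[ℂ] H := (V : H →L[ℂ] H) * (↑(T⁻¹) : H →L[ℂ] H) with hM
  have hXM : qX V T = star M * M := by
    simp [qX, hM, star_mul, mul_assoc]
  have hMunit : IsUnit M := (V.isUnit).mul (T⁻¹).isUnit
  have hXunit : IsUnit (qX V T) := by
    rw [hXM]; exact hMunit.star.mul hMunit
  have hspec : ∀ x ∈ spectrum ℝ (qX V T), 0 < x := by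
    intro x hx
    have h0 : (0:ℝ) ∉ spectrum ℝ (qX V T) := spectrum.zero_notMem ℝ hXunit
    have hnn : 0 ≤ x := by
      rw [hXM] at hx
      exact spectrum_star_mul_self_nonneg x hx
    rcases hnn.lt_or_eq with h | h
    · exact h
    · exact absurd (h ▸ hx) h0
  have hsa : IsSelfAdjoint (qX V T) := by
    rw [hXM]; exact IsSelfAdjoint.star_mul_self M
  have hlogcont : ContinuousOn Real.log (spectrum ℝ (qX V T)) :=
    Real.continuousOn_log.mono fun x hx => (hspec x hx).ne'
  have key : cfc Real.log (qX V T) ≤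
      cfc (fun x : ℝ => (Real.log t - 1) + t⁻¹ * x) (qX V T) := by
    apply cfc_mono
    · intro x hx
      have hx0 := hspec x hx
      have := Real.log_le_sub_one_of_pos (div_pos hx0 ht)
      rw [Real.log_div hx0.ne' ht.ne'] at this
      have : Real.log x ≤ Real.log t + (x / t - 1) := by linarith
      rw [div_eq_inv_mul] at this
      linarith
    · exact hlogcont
    · exact ((continuous_const.add (continuous_const.mul continuous_id)).continuousOn)
  have haff : cfc (fun x : ℝ => (Real.log t - 1) + t⁻¹ * x) (qX V T)
      = algebraMap ℝ _ (Real.log t - 1) + t⁻¹ • (qX V T) := by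
    rw [cfc_const_add (Real.log t - 1) (fun x => t⁻¹ * x) (qX V T)
      ((continuous_const.mul continuous_id).continuousOn) hsa,
      cfc_const_mul_id t⁻¹ (qX V T) hsa]
  have hconj := star_left_conjugate_le_conjugate key (T : H →L[ℂ] H)
  rw [haff] at hconj
  refine le_trans hconj (le_of_eq ?_)
  have hTinvT : (↑(T⁻¹) : H →L[ℂ] H) * (T : H →L[ℂ] H) = 1 := T.inv_mul
  have hstar : star (T : H →L[ℂ] H) * star (↑(T⁻¹) : H →L[ℂ] H) = 1 := by
    rw [← star_mul, hTinvT, star_one]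
  have hmid : star (T : H →L[ℂ] H) * qX V T * (T : H →L[ℂ] H)
      = modSq V := by
    simp only [qX, modSq]
    calc star (T : H →L[ℂ] H) * (star (↑(T⁻¹) : H →L[ℂ] H) *
        (star (V : H →L[ℂ] H) * (V : H →L[ℂ] H)) * (↑(T⁻¹) : H →L[ℂ] H)) * (T : H →L[ℂ] H)
        = (star (T : H →L[ℂ] H) * star (↑(T⁻¹) : H →L[ℂ] H)) *
          (star (V : H →L[ℂ] H) * (V : H →L[ℂ] H)) *
          ((↑(T⁻¹) : H →L[ℂ] H) * (T : H →L[ℂ] H)) := by simp only [mul_assoc]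
      _ = star (V : H →L[ℂ] H) * (V : H →L[ℂ] H) := by rw [hstar, hTinvT, one_mul, mul_one]
  have halg : (algebraMap ℝ (H →L[ℂ] H) (Real.log t - 1)) = (Real.log t - 1) • (1 : H →L[ℂ] H) := by
    rw [Algebra.algebraMap_eq_smul_one]
  rw [halg]
  rw [mul_add, add_mul, mul_smul_comm, smul_mul_assoc, mul_one,
    mul_smul_comm, smul_mul_assoc, hmid, sub_smul, one_smul]
  simp only [modSq]
end
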